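/- arXiv:1310.6682 — 5 statements merged into one kernel-verified Lean document; each statement's English description precedes it below -/
import Mathlib

section
/- Let G be a finite group of even order generated by a set of nontrivial elements g₁, …, g_r whose product g₁ ⋯ g_r equals 1, and let g₀ ∈ G have order 2. Setting g_{r+1}, …, g_{2r-1} to be g_r⁻¹, …, g₂⁻¹, the (4r−1)-tuple (g₀, g₀ g_{2r-1}⁻¹ g₀, …, g₀ g₁⁻¹ g₀, g₁, …, g_{2r-1}) consists of nontrivial elements, its last 4r−2 entries multiply to 1 and generate G, and the tuple satisfies the symmetry condition: the (r'+1−i)-th of the last 4r−2 entries equals g₀ times the inverse of the i-th of them times g₀, for each i ≤ (4r−2)/2 where r' = 4r−2. -/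
private lemma aux_conj {G : Type*} [Group G] (a : G) (h : a * a = 1) (f : ℕ → G) :
    ∀ n : ℕ, ((List.range n).map (fun i => a * (f (n - 1 - i))⁻¹ * a)).prod
      = a * (((List.range n).map f).prod)⁻¹ * a := by
  have h' : ∀ x : G, a * (a * x) = x := by
    intro x; rw [← mul_assoc, h, one_mul]
  intro n
  induction n generalizing f with
  | zero => simp [h]
  | succ n ih =>
    conv_lhs => rw [List.range_succ]
    conv_rhs => rw [List.range_succ_eq_map]
    rw [List.map_append, List.prod_append, List.map_cons, List.prod_cons]
    have hmap : (List.range n).map (fun i => a * (f (n + 1 - 1 - i))⁻¹ * a)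
        = (List.range n).map (fun i => a * ((fun k => f (k + 1)) (n - 1 - i))⁻¹ * a) := by
      apply List.map_congr_left
      intro i hi
      rw [List.mem_range] at hi
      show a * (f (n + 1 - 1 - i))⁻¹ * a = a * (f ((n - 1 - i) + 1))⁻¹ * a
      rw [show n + 1 - 1 - i = (n - 1 - i) + 1 from by omega]
    rw [hmap, ih (fun k => f (k + 1))]
    have hmap3 : (List.range n).map (f ∘ Nat.succ) = (List.range n).map (fun k => f (k + 1)) := by
      apply List.map_congr_left; intro i _; rfl
    rw [List.map_cons, List.map_map, hmap3, List.prod_cons]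
    rw [show n + 1 - 1 - n = 0 from by omega]
    simp [mul_assoc, h', mul_inv_rev]

private lemma aux_inv {G : Type*} [Group G] (f : ℕ → G) (n : ℕ) :
    ((List.range n).map (fun i => (f (n - 1 - i))⁻¹)).prod
      = (((List.range n).map f).prod)⁻¹ := by
  have := aux_conj (1 : G) (by simp) f n
  simpa using this

theorem stmt3 (G : Type*) [Group G] [Finite G] (r : ℕ) (hr : 1 ≤ r)
    (g : ℕ → G)
    (hg0 : g 0 = g 1) (horder : orderOf (g 1) = 2)
    (hne : ∀ i ∈ Finset.Icc 1 r, g i ≠ 1)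
    (hgen : Subgroup.closure (g '' (Finset.Icc 1 r : Finset ℕ)) = ⊤)
    (hprod : ((List.range r).map (fun i => g (i + 1))).prod = 1)
    (e : ℕ → G)
    (he1 : ∀ i ∈ Finset.Icc 1 r, e i = g i)
    (he2 : ∀ j ∈ Finset.Icc 1 (r - 1), e (r + j) = (g (r + 1 - j))⁻¹)
    (t : ℕ → G)
    (ht0 : t 0 = g 0)
    (ht1 : ∀ i ∈ Finset.Icc 1 (2 * r - 1), t i = g 0 * (e (2 * r - i))⁻¹ * g 0)
    (ht2 : ∀ i ∈ Finset.Icc (2 * r) (4 * r - 2), t i = e (i - (2 * r - 1))) :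
    (∀ i ∈ Finset.Icc 0 (4 * r - 2), t i ≠ 1) ∧
    ((List.range (4 * r - 2)).map (fun i => t (i + 1))).prod = 1 ∧
    Subgroup.closure (t '' (Finset.Icc 1 (4 * r - 2) : Finset ℕ)) = ⊤ ∧
    (∀ i ∈ Finset.Icc 1 (2 * r - 1),
      t (4 * r - 2 + 1 - i) = g 0 * (t i)⁻¹ * g 0) := by
  -- basic facts about g 1
  have hg1sq : g 1 * g 1 = 1 := by
    have := pow_orderOf_eq_one (g 1)
    rw [horder, pow_two] at this
    exact this
  have hg1inv : (g 1)⁻¹ = g 1 := inv_eq_of_mul_eq_one_right hg1sq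
  have hg1ne : g 1 ≠ 1 := by
    intro h
    rw [h, orderOf_one] at horder
    omega
  -- nontriviality of e on [1, 2r-1]
  have hene : ∀ k, 1 ≤ k → k ≤ 2 * r - 1 → e k ≠ 1 := by
    intro k h1 h2
    rcases le_or_gt k r with h | h
    · rw [he1 k (Finset.mem_Icc.mpr ⟨h1, h⟩)]
      exact hne k (Finset.mem_Icc.mpr ⟨h1, h⟩)
    · have hj : k = r + (k - r) := by omega
      have hmem : k - r ∈ Finset.Icc 1 (r - 1) := by
        rw [Finset.mem_Icc]; omega
      rw [hj, he2 _ hmem]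
      simp only [ne_eq, inv_eq_one]
      apply hne
      rw [Finset.mem_Icc]
      omega
  -- value of e on [1, 2r-1] product
  have hA : ((List.range r).map (fun i => e (i + 1))).prod = 1 := by
    have hmap : (List.range r).map (fun i => e (i + 1)) = (List.range r).map (fun i => g (i + 1)) := by
      apply List.map_congr_left
      intro i hi
      rw [List.mem_range] at hi
      exact he1 (i + 1) (Finset.mem_Icc.mpr ⟨by omega, by omega⟩)
    rw [hmap, hprod]
  have hprod2 : ((List.range (r - 1)).map (fun k => g (k + 2))).prod = (g 1)⁻¹ := by
    have hreq : r = (r - 1) + 1 := by omega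
    rw [hreq, List.range_succ_eq_map, List.map_cons, List.prod_cons, List.map_map] at hprod
    have hmap : (List.range (r - 1)).map ((fun i => g (i + 1)) ∘ Nat.succ)
        = (List.range (r - 1)).map (fun k => g (k + 2)) := by
      apply List.map_congr_left
      intro i _
      rfl
    rw [hmap] at hprod
    exact (inv_eq_of_mul_eq_one_right hprod).symm
  have hB : ((List.range (r - 1)).map (fun j => e (r + (j + 1)))).prod = g 1 := by
    have hmap : (List.range (r - 1)).map (fun j => e (r + (j + 1)))
        = (List.range (r - 1)).map (fun j => ((fun k => g (k + 2)) (r - 1 - 1 - j))⁻¹) := by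
      apply List.map_congr_left
      intro j hj
      rw [List.mem_range] at hj
      rw [he2 (j + 1) (Finset.mem_Icc.mpr ⟨by omega, by omega⟩)]
      show (g (r + 1 - (j + 1)))⁻¹ = (g ((r - 1 - 1 - j) + 2))⁻¹
      rw [show r + 1 - (j + 1) = (r - 1 - 1 - j) + 2 from by omega]
    rw [hmap, aux_inv (fun k => g (k + 2)) (r - 1), hprod2, inv_inv]
  have hE : ((List.range (2 * r - 1)).map (fun i => e (i + 1))).prod = g 1 := by
    have hsplit : 2 * r - 1 = r + (r - 1) := by omega
    rw [hsplit, List.range_add, List.map_append, List.prod_append]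
    have hmap : (List.map (fun i => e (i + 1)) ((List.range (r - 1)).map (fun x => r + x)))
        = (List.range (r - 1)).map (fun j => e (r + (j + 1))) := by
      rw [List.map_map]
      apply List.map_congr_left
      intro j _
      show e (r + j + 1) = e (r + (j + 1))
      rw [show r + j + 1 = r + (j + 1) from by omega]
    rw [hmap, hA, hB, one_mul]
  -- rewrite t's definition using g 1
  rw [hg0] at ht0 ht1 ⊢
  -- L1 product
  have hL1 : ((List.range (2 * r - 1)).map (fun i => t (i + 1))).prod = g 1 := by
    have hmap : (List.range (2 * r - 1)).map (fun i => t (i + 1))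
        = (List.range (2 * r - 1)).map
            (fun i => g 1 * ((fun k => e (k + 1)) (2 * r - 1 - 1 - i))⁻¹ * g 1) := by
      apply List.map_congr_left
      intro i hi
      rw [List.mem_range] at hi
      rw [ht1 (i + 1) (Finset.mem_Icc.mpr ⟨by omega, by omega⟩)]
      show g 1 * (e (2 * r - (i + 1)))⁻¹ * g 1 = g 1 * (e ((2 * r - 1 - 1 - i) + 1))⁻¹ * g 1
      rw [show 2 * r - (i + 1) = (2 * r - 1 - 1 - i) + 1 from by omega]
    rw [hmap, aux_conj (g 1) hg1sq (fun k => e (k + 1)) (2 * r - 1), hE, hg1inv]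
    rw [hg1sq, one_mul]
  -- L2 product
  have hL2 : ((List.range (2 * r - 1)).map (fun i => t (2 * r - 1 + (i + 1)))).prod = g 1 := by
    have hmap : (List.range (2 * r - 1)).map (fun i => t (2 * r - 1 + (i + 1)))
        = (List.range (2 * r - 1)).map (fun i => e (i + 1)) := by
      apply List.map_congr_left
      intro i hi
      rw [List.mem_range] at hi
      rw [ht2 (2 * r - 1 + (i + 1)) (Finset.mem_Icc.mpr ⟨by omega, by omega⟩)]
      show e (2 * r - 1 + (i + 1) - (2 * r - 1)) = e (i + 1)
      rw [show 2 * r - 1 + (i + 1) - (2 * r - 1) = i + 1 from by omega]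
    rw [hmap, hE]
  refine ⟨?_, ?_, ?_, ?_⟩
  · -- nontriviality
    intro i hi
    rw [Finset.mem_Icc] at hi
    rcases Nat.eq_zero_or_pos i with h0 | h0
    · rw [h0, ht0]; exact hg1ne
    rcases le_or_gt i (2 * r - 1) with h | h
    · rw [ht1 i (Finset.mem_Icc.mpr ⟨h0, h⟩)]
      intro hcon
      apply hene (2 * r - i) (by omega) (by omega)
      have hx : (e (2 * r - i))⁻¹ = (g 1)⁻¹ * (g 1 * (e (2 * r - i))⁻¹ * g 1) * (g 1)⁻¹ := by
        group
      rw [hcon] at hx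
      rw [hg1inv, mul_one, hg1sq] at hx
      rwa [inv_eq_one] at hx
    · rw [ht2 i (Finset.mem_Icc.mpr ⟨by omega, hi.2⟩)]
      exact hene (i - (2 * r - 1)) (by omega) (by omega)
  · -- product equals 1
    have hsplit : 4 * r - 2 = (2 * r - 1) + (2 * r - 1) := by omega
    rw [hsplit, List.range_add, List.map_append, List.prod_append]
    have hmap : (List.map (fun i => t (i + 1)) ((List.range (2 * r - 1)).map (fun x => 2 * r - 1 + x)))
        = (List.range (2 * r - 1)).map (fun i => t (2 * r - 1 + (i + 1))) := by
      rw [List.map_map]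
      apply List.map_congr_left
      intro i _
      show t (2 * r - 1 + i + 1) = t (2 * r - 1 + (i + 1))
      rw [show 2 * r - 1 + i + 1 = 2 * r - 1 + (i + 1) from by omega]
    rw [hmap, hL1, hL2, hg1sq]
  · -- generation
    apply le_antisymm le_top
    rw [← hgen]
    rw [Subgroup.closure_le]
    rintro x ⟨i, hi, rfl⟩
    simp only [Finset.coe_Icc, Set.mem_Icc] at hi
    apply Subgroup.subset_closure
    refine ⟨2 * r - 1 + i, ?_, ?_⟩
    · simp only [Finset.coe_Icc, Set.mem_Icc]
      omega
    · rw [ht2 (2 * r - 1 + i) (Finset.mem_Icc.mpr ⟨by omega, by omega⟩)]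
      have harg : 2 * r - 1 + i - (2 * r - 1) = i := by omega
      rw [harg, he1 i (Finset.mem_Icc.mpr ⟨hi.1, hi.2⟩)]
  · -- symmetry
    intro i hi
    rw [Finset.mem_Icc] at hi
    have h1 : t (4 * r - 2 + 1 - i) = e (2 * r - i) := by
      rw [ht2 (4 * r - 2 + 1 - i) (Finset.mem_Icc.mpr ⟨by omega, by omega⟩)]
      rw [show 4 * r - 2 + 1 - i - (2 * r - 1) = 2 * r - i from by omega]
    rw [h1, ht1 i (Finset.mem_Icc.mpr hi)]
    group
end

section
/- Let a and c be nonzero integers such that −4ac is not a square in ℚ. Then there exist infinitely many primes p such that there are no nonzero integers x, y, z with p x² = a y² + c z². -/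
/-!
If `-ac` is not a square in `ℤ`, write it as `s² d` with `d ≠ 1` squarefree. Either `d` has an odd
prime factor `q`, and the Chinese remainder theorem with quadratic reciprocity gives an odd `b` with
`J(d | b) = -1`, or `d ∈ {-1, 2, -2}`, where `b = 3` or `b = 5` does. Since `J(d | ·)` only depends on
its argument modulo `4|d|`, Dirichlet's theorem yields infinitely many primes `p` with `J(-ac | p) = -1`.
For such `p`, a solution of `p x² = a y² + c z²` with `p ∤ z` would make `-ac ≡ (ay/z)²` a square
mod `p`, and `p ∣ z` forces `p ∣ y` and then `p ∣ x`, so dividing by `p` descends to a smaller `z`.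
-/

open NumberTheorySymbols

theorem Nat.dvd_of_squarefree_of_forall_prime_dvd {m n : ℕ} (hm : Squarefree m) (hn : n ≠ 0)
    (h : ∀ q, q.Prime → q ∣ m → q ∣ n) : m ∣ n := by
  rw [← Nat.prod_primeFactors_of_squarefree hm, Nat.prod_primeFactors_dvd_iff hn]
  intro q hq
  rw [Nat.mem_primeFactors] at hq ⊢
  exact ⟨hq.1, h q hq.1 hq.2.1, hn⟩

theorem Int.sq_mul_squarefree (n : ℤ) : ∃ (a : ℤ) (b : ℕ), b ^ 2 * a = n ∧ Squarefree a := by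
  obtain ⟨a, b, hab, ha⟩ := Nat.sq_mul_squarefree n.natAbs
  rcases Int.natAbs_eq n with hn | hn
  · exact ⟨a, b, by rw [hn, ← hab]; push_cast; ring, Int.squarefree_natCast.2 ha⟩
  · refine ⟨-a, b, by rw [hn, ← hab]; push_cast; ring, ?_⟩
    rwa [← Int.squarefree_natAbs, Int.natAbs_neg, Int.natAbs_natCast]

theorem exists_odd_jacobiSym_prime_mul_eq_neg_one {q : ℕ} (hq : q.Prime) (hq2 : q ≠ 2) {d : ℤ}
    (hqd : ¬(q : ℤ) ∣ d) : ∃ b : ℕ, Odd b ∧ J(q * d | b) = -1 := by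
  have := Fact.mk hq
  obtain ⟨r, hr⟩ := FiniteField.exists_nonsquare (F := ZMod q) (by rwa [ZMod.ringChar_zmod_n])
  have hcop : Nat.Coprime (4 * d.natAbs) q := by
    refine Nat.Coprime.symm <| (hq.coprime_iff_not_dvd).2 fun h => ?_
    rcases (Nat.Prime.dvd_mul hq).1 h with h4 | hd
    · exact hq2 ((Nat.prime_dvd_prime_iff_eq hq Nat.prime_two).1
        (hq.dvd_of_dvd_pow (n := 2) h4))
    · exact hqd (Int.natCast_dvd.2 hd)
  obtain ⟨b, hb1, hbr⟩ := Nat.chineseRemainder hcop 1 r.val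
  have hb4 : b % 4 = 1 := hb1.of_dvd (dvd_mul_right 4 _)
  have hb : Odd b := Nat.odd_iff.2 (by omega)
  refine ⟨b, hb, ?_⟩
  have hJq : J(q | b) = -1 := by
    rw [jacobiSym.quadratic_reciprocity_one_mod_four' (hq.odd_of_ne_two hq2) hb4,
      ← jacobiSym.legendreSym.to_jacobiSym, legendreSym.eq_neg_one_iff, Int.cast_natCast,
      (ZMod.natCast_eq_natCast_iff _ _ _).2 hbr, ZMod.natCast_zmod_val]
    exact hr
  have hJd : J(d | b) = 1 := by
    rw [jacobiSym.mod_right d hb, hb1, ← jacobiSym.mod_right d odd_one, jacobiSym.one_right]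
  rw [jacobiSym.mul_left, hJq, hJd, neg_one_mul]

theorem exists_odd_jacobiSym_eq_neg_one_of_squarefree {d : ℤ} (hd : Squarefree d) (hd1 : d ≠ 1) :
    ∃ b : ℕ, Odd b ∧ J(d | b) = -1 := by
  by_cases hodd : ∃ q : ℕ, q.Prime ∧ q ≠ 2 ∧ (q : ℤ) ∣ d
  · obtain ⟨q, hq, hq2, d', rfl⟩ := hodd
    refine exists_odd_jacobiSym_prime_mul_eq_neg_one hq hq2 fun hqd => ?_
    exact (Nat.prime_iff_prime_int.mp hq).not_isUnit (hd q (mul_dvd_mul_left _ hqd))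
  · push Not at hodd
    have h2 : d.natAbs ∣ 2 := by
      refine Nat.dvd_of_squarefree_of_forall_prime_dvd (Int.squarefree_natAbs.2 hd) two_ne_zero
        fun q hq hqd => ?_
      by_contra h
      exact hodd q hq (by rintro rfl; exact h dvd_rfl) (Int.natCast_dvd.2 hqd)
    have : d = -1 ∨ d = 2 ∨ d = -2 := by
      rcases (Nat.dvd_prime Nat.prime_two).1 h2 with h | h <;> omega
    rcases this with rfl | rfl | rfl
    exacts [⟨3, by decide, by norm_num⟩, ⟨5, by decide, by norm_num⟩, ⟨5, by decide, by norm_num⟩]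

theorem infinite_setOf_prime_jacobiSym_eq_neg_one {n : ℤ} (hn : ¬IsSquare n) :
    {p : ℕ | p.Prime ∧ J(n | p) = -1}.Infinite := by
  obtain ⟨d, s, rfl, hd⟩ := Int.sq_mul_squarefree n
  have hd1 : d ≠ 1 := by rintro rfl; exact hn ⟨s, by ring⟩
  have hs : s ≠ 0 := by rintro rfl; exact hn ⟨0, by simp⟩
  obtain ⟨b, hb, hJb⟩ := exists_odd_jacobiSym_eq_neg_one_of_squarefree hd hd1
  have hbd : b.Coprime (4 * d.natAbs) := by
    have h4 : b.Coprime 4 := (Nat.coprime_two_right.2 hb).pow_right 2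
    have hgcd : d.gcd b = 1 := by
      by_contra h
      have := jacobiSym.eq_zero_iff.2 ⟨hb.pos.ne', h⟩
      omega
    exact h4.mul_right (Nat.coprime_comm.1 hgcd)
  refine Set.infinite_of_forall_exists_gt fun N => ?_
  obtain ⟨p, hpN, hp, hpb⟩ := Nat.forall_exists_prime_gt_and_modEq (max N s)
    (mul_ne_zero four_ne_zero (Int.natAbs_ne_zero.2 hd.ne_zero)) hbd
  have hp2 : p % 2 = b % 2 := hpb.of_dvd (dvd_mul_of_dvd_left (by norm_num) _)
  have hp_odd : Odd p := Nat.odd_iff.2 (hp2.trans (Nat.odd_iff.1 hb))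
  have hsp : Int.gcd s p = 1 :=
    Nat.coprime_comm.1 <| (hp.coprime_iff_not_dvd).2 fun h => by
      have := Nat.le_of_dvd (Nat.pos_of_ne_zero hs) h
      omega
  refine ⟨p, ⟨hp, ?_⟩, by omega⟩
  rw [jacobiSym.mul_left, jacobiSym.sq_one' hsp, one_mul, jacobiSym.mod_right d hp_odd, hpb,
    ← jacobiSym.mod_right d hb, hJb]

theorem isSquare_neg_mul_of_mul_sq_add_mul_sq_eq_zero {F : Type*} [Field F] {a c y z : F}
    (h : a * y ^ 2 + c * z ^ 2 = 0) (hz : z ≠ 0) : IsSquare (-(a * c)) :=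
  ⟨a * y / z, by field_simp; linear_combination (-a) * h⟩

theorem Int.eq_zero_of_prime_mul_sq_eq_add_mul_sq {p : ℕ} [hp : Fact p.Prime] {a c : ℤ}
    (hac : ¬IsSquare ((-(a * c) : ℤ) : ZMod p)) {x y z : ℤ}
    (h : p * x ^ 2 = a * y ^ 2 + c * z ^ 2) : z = 0 := by
  induction hN : z.natAbs using Nat.strong_induction_on generalizing x y z with
  | _ N ih =>
  by_contra hz
  have hmod : (a : ZMod p) * (y : ZMod p) ^ 2 + c * (z : ZMod p) ^ 2 = 0 := by
    simpa using (congrArg (Int.cast : ℤ → ZMod p) h).symm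
  have hzp : (z : ZMod p) = 0 := by
    by_contra hzp
    exact hac (by push_cast; exact isSquare_neg_mul_of_mul_sq_add_mul_sq_eq_zero hmod hzp)
  have hap : (a : ZMod p) ≠ 0 := fun ha => hac ⟨0, by push_cast [ha]; ring⟩
  have hyp : (y : ZMod p) = 0 := by simpa [hzp, hap] using hmod
  obtain ⟨z₁, rfl⟩ := (ZMod.intCast_zmod_eq_zero_iff_dvd z p).mp hzp
  obtain ⟨y₁, rfl⟩ := (ZMod.intCast_zmod_eq_zero_iff_dvd y p).mp hyp
  have hp0 : (p : ℤ) ≠ 0 := by exact_mod_cast hp.out.ne_zero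
  obtain ⟨x₁, rfl⟩ : (p : ℤ) ∣ x := by
    refine Int.Prime.dvd_pow' (k := 2) hp.out ⟨a * y₁ ^ 2 + c * z₁ ^ 2, ?_⟩
    exact mul_left_cancel₀ hp0 (by linear_combination h)
  have h₁ : p * x₁ ^ 2 = a * y₁ ^ 2 + c * z₁ ^ 2 :=
    mul_left_cancel₀ (pow_ne_zero 2 hp0) (by linear_combination h)
  have hz₁ : z₁ ≠ 0 := by rintro rfl; simp at hz
  have hlt : z₁.natAbs < N := by
    rw [← hN, Int.natAbs_mul, Int.natAbs_natCast]
    exact lt_mul_left (Int.natAbs_pos.mpr hz₁) hp.out.one_lt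
  exact hz₁ (ih _ hlt h₁ rfl)

theorem stmt7_general (a c : ℤ)
    (hns : ¬ ∃ q : ℚ, q ^ 2 = ((-4 * a * c : ℤ) : ℚ)) :
    {p : ℕ | p.Prime ∧ ¬ ∃ x y z : ℤ, x ≠ 0 ∧ y ≠ 0 ∧ z ≠ 0 ∧
      (p : ℤ) * x ^ 2 = a * y ^ 2 + c * z ^ 2}.Infinite := by
  have hac : ¬IsSquare (-(a * c)) := by
    rintro ⟨k, hk⟩
    refine hns ⟨(2 * k : ℤ), ?_⟩
    rw [← Int.cast_pow]
    exact congrArg _ (by linear_combination (-4) * hk)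
  refine (infinite_setOf_prime_jacobiSym_eq_neg_one hac).mono ?_
  rintro p ⟨hp, hJ⟩
  have := Fact.mk hp
  refine ⟨hp, ?_⟩
  rintro ⟨x, y, z, -, -, hz, h⟩
  exact hz <|
    Int.eq_zero_of_prime_mul_sq_eq_add_mul_sq (ZMod.nonsquare_of_jacobiSym_eq_neg_one hJ) h

theorem stmt7 (a c : ℤ) (ha : a ≠ 0) (hc : c ≠ 0)
    (hns : ¬ ∃ q : ℚ, q ^ 2 = ((-4 * a * c : ℤ) : ℚ)) :
    {p : ℕ | p.Prime ∧ ¬ ∃ x y z : ℤ, x ≠ 0 ∧ y ≠ 0 ∧ z ≠ 0 ∧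
      (p : ℤ) * x ^ 2 = a * y ^ 2 + c * z ^ 2}.Infinite :=
  stmt7_general a c hns
end

section
/- Let a, b be nonzero squarefree positive integers with b ≠ 1, and let d₂ be a positive squarefree integer such that neither a·b·d₂ nor a·d₂ is a square in ℚ. Then for any prime p modulo which neither a·b·d₂ nor a·d₂ is a square, and with d₁ = −p, none of the following equations has a solution in nonzero integers (X, Y, Z): (i) a d₁ X² − b d₂ Y² − Z² = 0; (ii) a X² − b d₂ Y² − d₁ Z² = 0; (iii) a d₂ X² − b d₁ Y² − Z² = 0; (iv) a X² − b d₁ Y² − d₂ Z² = 0; (v) a d₂ X² − b Y² − d₁ Z² = 0; (vi) a d₁ X² − b Y² − d₂ Z² = 0. -/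
lemma key_descent (p : ℕ) (hp : p.Prime) (A B C : ℤ)
    (hA : ¬ (p : ℤ) ∣ A) (hB : ¬ (p : ℤ) ∣ B) (hC : ¬ (p : ℤ) ∣ C)
    (hnr : ¬ ∃ u : ℤ, (p : ℤ) ∣ u ^ 2 - A * C) :
    ∀ x y z : ℤ, A * x ^ 2 + (p : ℤ) * B * y ^ 2 = C * z ^ 2 → x = 0 := by
  haveI : Fact p.Prime := ⟨hp⟩
  have hpp : Prime (p : ℤ) := Int.prime_iff_natAbs_prime.mpr (by simpa using hp)
  have hp0 : (p : ℤ) ≠ 0 := by exact_mod_cast hp.ne_zero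
  have hmain : ∀ n : ℕ, ∀ x y z : ℤ, x.natAbs = n →
      A * x ^ 2 + (p : ℤ) * B * y ^ 2 = C * z ^ 2 → x = 0 := by
    intro n
    induction n using Nat.strong_induction_on with
    | _ n ih =>
      intro x y z hn heq
      by_contra hx0
      by_cases hpx : (p : ℤ) ∣ x
      · -- descent case
        have hpz2 : (p : ℤ) ∣ C * z ^ 2 := by
          obtain ⟨x₁, hx₁⟩ := hpx
          refine ⟨A * p * x₁ ^ 2 + B * y ^ 2, ?_⟩
          rw [← heq, hx₁]; ring
        have hpz : (p : ℤ) ∣ z := by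
          rcases hpp.dvd_mul.mp hpz2 with h | h
          · exact absurd h hC
          · exact hpp.dvd_of_dvd_pow h
        obtain ⟨x₁, hx₁⟩ := hpx
        obtain ⟨z₁, hz₁⟩ := hpz
        have hpy2 : (p : ℤ) ∣ B * y ^ 2 := by
          refine ⟨C * z₁ ^ 2 - A * x₁ ^ 2, ?_⟩
          have h : (p:ℤ) * (B * y ^ 2) = (p:ℤ) * ((p:ℤ) * (C * z₁ ^ 2 - A * x₁ ^ 2)) := by
            rw [hx₁, hz₁] at heq; nlinarith [heq]
          exact mul_left_cancel₀ hp0 h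
        have hpy : (p : ℤ) ∣ y := by
          rcases hpp.dvd_mul.mp hpy2 with h | h
          · exact absurd h hB
          · exact hpp.dvd_of_dvd_pow h
        obtain ⟨y₁, hy₁⟩ := hpy
        have heq' : A * x₁ ^ 2 + (p : ℤ) * B * y₁ ^ 2 = C * z₁ ^ 2 := by
          have h2 : (p:ℤ)^2 * (A * x₁ ^ 2 + (p:ℤ) * B * y₁ ^ 2) = (p:ℤ)^2 * (C * z₁ ^ 2) := by
            rw [hx₁, hy₁, hz₁] at heq; nlinarith [heq]
          exact mul_left_cancel₀ (pow_ne_zero 2 hp0) h2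
        have hx₁0 : x₁ ≠ 0 := by
          intro h; apply hx0; rw [hx₁, h, mul_zero]
        have hlt : x₁.natAbs < n := by
          rw [← hn, hx₁, Int.natAbs_mul]
          have h1 : 1 ≤ x₁.natAbs := Int.natAbs_pos.mpr hx₁0
          have h2 : 2 ≤ (p : ℤ).natAbs := by
            simpa using hp.two_le
          nlinarith
        exact hx₁0 (ih x₁.natAbs hlt x₁ y₁ z₁ rfl heq')
      · -- nonresidue case
        have hxz : ((x : ZMod p) : ZMod p) ≠ 0 := by
          simpa [ZMod.intCast_zmod_eq_zero_iff_dvd] using hpx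
        have hcast : (A : ZMod p) * (x : ZMod p) ^ 2 = (C : ZMod p) * (z : ZMod p) ^ 2 := by
          have := congrArg (fun t : ℤ => (t : ZMod p)) heq
          push_cast at this
          simpa [ZMod.natCast_self] using this
        set w : ZMod p := (C : ZMod p) * (z : ZMod p) * ((x : ZMod p))⁻¹ with hw
        have hw2 : w ^ 2 = (A : ZMod p) * (C : ZMod p) := by
          have hxinv : (x : ZMod p) * ((x : ZMod p))⁻¹ = 1 :=
            ZMod.mul_inv_of_unit _ (Ne.isUnit hxz)
          calc w ^ 2 = (C : ZMod p) * ((C : ZMod p) * (z : ZMod p) ^ 2) * (((x : ZMod p))⁻¹) ^ 2 := by ring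
            _ = (C : ZMod p) * ((A : ZMod p) * (x : ZMod p) ^ 2) * (((x : ZMod p))⁻¹) ^ 2 := by rw [hcast]
            _ = (A : ZMod p) * (C : ZMod p) * ((x : ZMod p) * ((x : ZMod p))⁻¹) ^ 2 := by ring
            _ = (A : ZMod p) * (C : ZMod p) := by rw [hxinv]; ring
        apply hnr
        refine ⟨(w.val : ℤ), ?_⟩
        have : (((w.val : ℤ) ^ 2 - A * C : ℤ) : ZMod p) = 0 := by
          push_cast
          rw [ZMod.natCast_val, ZMod.cast_id, hw2]
          ring
        exact (ZMod.intCast_zmod_eq_zero_iff_dvd _ _).mp this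
  intro x y z heq
  exact hmain x.natAbs x y z rfl heq

theorem stmt8 (a b d₂ : ℤ) (ha : 0 < a) (hb : 0 < b) (hd₂ : 0 < d₂)
    (hsa : Squarefree a) (hsb : Squarefree b) (hsd : Squarefree d₂) (hb1 : b ≠ 1)
    (habd : ¬ ∃ q : ℚ, q ^ 2 = ((a * b * d₂ : ℤ) : ℚ))
    (had : ¬ ∃ q : ℚ, q ^ 2 = ((a * d₂ : ℤ) : ℚ))
    (p : ℕ) (hp : p.Prime)
    (hpa : ¬ (p : ℤ) ∣ a) (hpb : ¬ (p : ℤ) ∣ b) (hpd : ¬ (p : ℤ) ∣ d₂)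
    (hnr1 : ¬ ∃ u : ℤ, (p : ℤ) ∣ u ^ 2 - a * b * d₂)
    (hnr2 : ¬ ∃ u : ℤ, (p : ℤ) ∣ u ^ 2 - a * d₂)
    (d₁ : ℤ) (hd₁ : d₁ = -(p : ℤ)) :
    (¬ ∃ x y z : ℤ, x * y * z ≠ 0 ∧ a * d₁ * x ^ 2 - b * d₂ * y ^ 2 - z ^ 2 = 0) ∧
    (¬ ∃ x y z : ℤ, x * y * z ≠ 0 ∧ a * x ^ 2 - b * d₂ * y ^ 2 - d₁ * z ^ 2 = 0) ∧
    (¬ ∃ x y z : ℤ, x * y * z ≠ 0 ∧ a * d₂ * x ^ 2 - b * d₁ * y ^ 2 - z ^ 2 = 0) ∧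
    (¬ ∃ x y z : ℤ, x * y * z ≠ 0 ∧ a * x ^ 2 - b * d₁ * y ^ 2 - d₂ * z ^ 2 = 0) ∧
    (¬ ∃ x y z : ℤ, x * y * z ≠ 0 ∧ a * d₂ * x ^ 2 - b * y ^ 2 - d₁ * z ^ 2 = 0) ∧
    (¬ ∃ x y z : ℤ, x * y * z ≠ 0 ∧ a * d₁ * x ^ 2 - b * y ^ 2 - d₂ * z ^ 2 = 0) := by
  subst hd₁
  have hpp : Prime (p : ℤ) := Int.prime_iff_natAbs_prime.mpr (by simpa using hp)
  have hp0 : (0 : ℤ) < p := by exact_mod_cast hp.pos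
  have hp1 : ¬ (p : ℤ) ∣ 1 := hpp.not_dvd_one
  have hpbd : ¬ (p : ℤ) ∣ b * d₂ := fun h => (hpp.dvd_mul.mp h).elim hpb hpd
  have hpad : ¬ (p : ℤ) ∣ a * d₂ := fun h => (hpp.dvd_mul.mp h).elim hpa hpd
  have one_le_sq : ∀ t : ℤ, t ≠ 0 → 1 ≤ t ^ 2 := by
    intro t ht
    have h1 : 1 ≤ |t| := Int.one_le_abs (by simpa using ht)
    calc (1:ℤ) = 1 * 1 := by ring
      _ ≤ |t| * |t| := mul_le_mul h1 h1 (by norm_num) (abs_nonneg t)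
      _ = t ^ 2 := by rw [← abs_mul, abs_mul_self]; ring
  refine ⟨?_, ?_, ?_, ?_, ?_, ?_⟩ <;> rintro ⟨x, y, z, hxyz, heq⟩ <;>
    have hx : x ≠ 0 := fun h => hxyz (by rw [h]; ring) <;>
    have hy : y ≠ 0 := fun h => hxyz (by rw [h]; ring) <;>
    have hz : z ≠ 0 := fun h => hxyz (by rw [h]; ring)
  · -- (i) sign
    nlinarith [one_le_sq x hx, sq_nonneg y, sq_nonneg z, mul_pos ha hp0, mul_pos hb hd₂]
  · -- (ii) a x² + p z² = b d₂ y²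
    have hnr : ¬ ∃ u : ℤ, (p : ℤ) ∣ u ^ 2 - a * (b * d₂) := by
      rintro ⟨u, hu⟩
      exact hnr1 ⟨u, by rwa [show a * (b * d₂) = a * b * d₂ from by ring] at hu⟩
    have := key_descent p hp a 1 (b * d₂) hpa hp1 hpbd hnr x z y (by linarith)
    exact hx this
  · -- (iii) a d₂ x² + p b y² = z²
    have hnr : ¬ ∃ u : ℤ, (p : ℤ) ∣ u ^ 2 - a * d₂ * 1 := by
      rintro ⟨u, hu⟩
      exact hnr2 ⟨u, by rwa [show a * d₂ * 1 = a * d₂ from by ring] at hu⟩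
    have := key_descent p hp (a * d₂) b 1 hpad hpb hp1 hnr x y z (by linarith)
    exact hx this
  · -- (iv) a x² + p b y² = d₂ z²
    have := key_descent p hp a b d₂ hpa hpb hpd hnr2 x y z (by linarith)
    exact hx this
  · -- (v) a d₂ x² + p z² = b y²
    have hnr : ¬ ∃ u : ℤ, (p : ℤ) ∣ u ^ 2 - a * d₂ * b := by
      rintro ⟨u, hu⟩
      exact hnr1 ⟨u, by rwa [show a * d₂ * b = a * b * d₂ from by ring] at hu⟩
    have := key_descent p hp (a * d₂) 1 b hpad hp1 hpb hnr x z y (by linarith)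
    exact hx this
  · -- (vi) sign
    nlinarith [one_le_sq x hx, sq_nonneg y, sq_nonneg z, mul_pos ha hp0, hb.le, hd₂.le]
end

section
/- Let P(T) ∈ K[T] be a nonconstant polynomial over a number field K with ring of integers A. Then there exist infinitely many nonzero primes 𝔭 of A that are 'prime divisors' of P, i.e., for which there exists t₀ ∈ K with P(t₀) ∈ 𝔭 A_𝔭 (lying in the maximal ideal of the localization). -/
open Polynomial Filter NumberField

/-! Schur's argument. Clear denominators to get `Q ∈ 𝓞 K[X]` of positive degree and pick `a` with
`d = Q(a) ≠ 0`. For `n ≠ 0` lying in finitely many given nonzero primes,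
`Q(a + d n t) = d (1 + n t u)` for some `u`; for `t` large the norm of `Q(a + d n t)` exceeds
`|N d|`, so `1 + n t u` is a nonunit, and a maximal ideal containing it is a prime divisor of `P`
that avoids all the given primes. -/

theorem Polynomial.exists_eval_add_eval_mul_eq {R : Type*} [CommRing R] (Q : R[X]) (a c : R) :
    ∃ u, Q.eval (a + Q.eval a * c) = Q.eval a * (1 + c * u) := by
  obtain ⟨u, hu⟩ := sub_dvd_eval_sub (a + Q.eval a * c) a Q
  exact ⟨u, by linear_combination hu⟩

theorem Polynomial.exists_isMaximal_eval_mem_notMem_of_not_associated {R : Type*} [CommRing R]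
    (Q : R[X]) {a c : R} (h : ¬Associated (Q.eval a) (Q.eval (a + Q.eval a * c))) :
    ∃ 𝔪 : Ideal R, 𝔪.IsMaximal ∧ Q.eval (a + Q.eval a * c) ∈ 𝔪 ∧ c ∉ 𝔪 := by
  obtain ⟨u, hu⟩ := Q.exists_eval_add_eval_mul_eq a c
  have hw : ¬IsUnit (1 + c * u) := fun hw => h ⟨hw.unit, hu.symm⟩
  obtain ⟨𝔪, h𝔪, hw𝔪⟩ := exists_max_ideal_of_mem_nonunits hw
  refine ⟨𝔪, h𝔪, hu ▸ 𝔪.mul_mem_left _ hw𝔪, fun hc => h𝔪.ne_top ?_⟩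
  rw [Ideal.eq_top_iff_one]
  simpa using 𝔪.sub_mem hw𝔪 (𝔪.mul_mem_right u hc)

theorem Ideal.set_infinite_of_forall_exists_notMem {R : Type*} [CommRing R] [IsDomain R]
    {S : Set (Ideal R)} (hS : ∀ 𝔭 ∈ S, 𝔭 ≠ ⊥) (h : ∀ n : R, n ≠ 0 → ∃ 𝔭 ∈ S, n ∉ 𝔭) :
    S.Infinite := by
  intro hfin
  have hI : ∏ 𝔭 ∈ hfin.toFinset, 𝔭 ≠ ⊥ :=
    Finset.prod_ne_zero_iff.mpr fun 𝔭 h𝔭 => hS 𝔭 (hfin.mem_toFinset.mp h𝔭)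
  obtain ⟨n, hnI, hn⟩ := Submodule.exists_mem_ne_zero_of_ne_bot hI
  obtain ⟨𝔭, h𝔭, hn𝔭⟩ := h n hn
  exact hn𝔭 (Ideal.le_of_dvd (Finset.dvd_prod_of_mem _ (hfin.mem_toFinset.mpr h𝔭)) hnI)

theorem NumberField.tendsto_abs_norm_eval_natCast_atTop {K : Type*} [Field K] [NumberField K]
    (p : K[X]) (hp : 0 < p.degree) :
    Tendsto (fun n : ℕ => |Algebra.norm ℚ (p.eval (n : K))|) atTop atTop := by
  have hplace (w : InfinitePlace K) : Tendsto (fun n : ℕ => w (p.eval (n : K))) atTop atTop := by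
    have hmap : 0 < (p.map w.embedding).degree := by rwa [degree_map]
    refine ((p.map w.embedding).tendsto_norm_atTop hmap (z := fun n : ℕ => (n : ℂ)) ?_).congr
      fun n => by rw [← w.norm_embedding_eq, ← map_natCast w.embedding, eval_map_apply]
    simpa only [Complex.norm_natCast] using tendsto_natCast_atTop_atTop (R := ℝ)
  rw [← tendsto_ratCast_atTop_iff (R := ℝ)]
  simp_rw [← InfinitePlace.prod_eq_abs_norm, ← Finset.prod_fn]
  refine Finset.prod_induction_nonempty _ (fun f => Tendsto f atTop atTop)
    (fun _ _ hf hg => hf.atTop_mul_atTop₀ hg) Finset.univ_nonempty fun w _ => ?_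
  exact (tendsto_pow_atTop InfinitePlace.mult_ne_zero).comp (hplace w)

theorem NumberField.abs_norm_eq_of_associated {K : Type*} [Field K] [NumberField K]
    {x y : 𝓞 K} (h : Associated x y) :
    |Algebra.norm ℚ (x : K)| = |Algebra.norm ℚ (y : K)| := by
  rw [← Algebra.coe_norm_int, ← Algebra.coe_norm_int, ← Int.cast_abs, ← Int.cast_abs,
    Int.abs_eq_natAbs, Int.abs_eq_natAbs, Int.natAbs_eq_iff_associated.mpr (h.map _)]

theorem NumberField.exists_isMaximal_notMem_eval_mem {K : Type*} [Field K] [NumberField K]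
    (Q : (𝓞 K)[X]) (hQ : 0 < Q.natDegree) {n : 𝓞 K} (hn : n ≠ 0) :
    ∃ 𝔪 : Ideal (𝓞 K), 𝔪.IsMaximal ∧ n ∉ 𝔪 ∧ ∃ ξ, Q.eval ξ ∈ 𝔪 := by
  obtain ⟨a, ha⟩ : ∃ a, Q.eval a ≠ 0 := by
    by_contra! h
    exact hQ.ne' (by rw [Q.zero_of_eval_zero h, natDegree_zero])
  set d := Q.eval a
  have hdn : ((d * n : 𝓞 K) : K) ≠ 0 := by exact_mod_cast mul_ne_zero ha hn
  set L : K[X] := (Q.map (algebraMap (𝓞 K) K)).comp (C ((d * n : 𝓞 K) : K) * X + C (a : K))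
  have hL : 0 < L.degree := by
    rw [← natDegree_pos_iff_degree_pos, natDegree_comp, natDegree_linear hdn, mul_one,
      natDegree_map_eq_of_injective (IsFractionRing.injective (𝓞 K) K)]
    exact hQ
  obtain ⟨t, ht⟩ := ((tendsto_abs_norm_eval_natCast_atTop L hL).eventually_gt_atTop
    |Algebra.norm ℚ (d : K)|).exists
  have hLt : L.eval (t : K) = ((Q.eval (a + d * (n * t)) : 𝓞 K) : K) := by
    have hlin : (C ((d * n : 𝓞 K) : K) * X + C (a : K)).eval (t : K) =
        algebraMap (𝓞 K) K (a + d * (n * t)) := by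
      simp only [eval_add, eval_mul, eval_C, eval_X, map_add, map_mul, map_natCast]
      ring
    rw [eval_comp, hlin, eval_map_apply]
  obtain ⟨𝔪, h𝔪, hξ, hnt⟩ :=
    Q.exists_isMaximal_eval_mem_notMem_of_not_associated (a := a) (c := n * t)
      fun h => ht.ne (hLt ▸ abs_norm_eq_of_associated h)
  exact ⟨𝔪, h𝔪, fun hn𝔪 => hnt (𝔪.mul_mem_right _ hn𝔪), _, hξ⟩

/-- `P(t₀) ∈ 𝔭 A_𝔭`, written without localizing as `P(t₀) = x / s` with `x ∈ 𝔭`, `s ∉ 𝔭`. -/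
def Polynomial.IsPrimeDivisor {K : Type*} [Field K] [NumberField K] (P : K[X])
    (𝔭 : Ideal (𝓞 K)) : Prop :=
  ∃ (t₀ : K) (x s : 𝓞 K), x ∈ 𝔭 ∧ s ∉ 𝔭 ∧
    P.eval t₀ * algebraMap (𝓞 K) K s = algebraMap (𝓞 K) K x

theorem NumberField.exists_isMaximal_isPrimeDivisor_notMem {K : Type*} [Field K] [NumberField K]
    (P : K[X]) (hP : 0 < P.natDegree) {n : 𝓞 K} (hn : n ≠ 0) :
    ∃ 𝔪 : Ideal (𝓞 K), 𝔪.IsMaximal ∧ n ∉ 𝔪 ∧ P.IsPrimeDivisor 𝔪 := by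
  obtain ⟨b, hbM, hb⟩ := IsLocalization.integerNormalization_spec (nonZeroDivisors (𝓞 K)) P
  set Q := IsLocalization.integerNormalization (nonZeroDivisors (𝓞 K)) P
  have hb0 : b ≠ 0 := nonZeroDivisors.ne_zero hbM
  have hQ : 0 < Q.natDegree := by
    rwa [← natDegree_map_eq_of_injective (IsFractionRing.injective (𝓞 K) K), hb,
      natDegree_smul _ hb0]
  obtain ⟨𝔪, h𝔪, hbn, ξ, hξ⟩ := exists_isMaximal_notMem_eval_mem Q hQ (mul_ne_zero hb0 hn)
  refine ⟨𝔪, h𝔪, fun hn𝔪 => hbn (𝔪.mul_mem_left _ hn𝔪), ξ, Q.eval ξ, b,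
    hξ, fun hb𝔪 => hbn (𝔪.mul_mem_right _ hb𝔪), ?_⟩
  rw [← eval_map_apply, hb, eval_smul, Algebra.smul_def, mul_comm]

theorem stmt17 (K : Type*) [Field K] [NumberField K]
    (P : Polynomial K) (hP : 0 < P.natDegree) :
    {𝔭 : Ideal (NumberField.RingOfIntegers K) | 𝔭 ≠ ⊥ ∧ 𝔭.IsPrime ∧
      ∃ (t₀ : K) (x s : NumberField.RingOfIntegers K), x ∈ 𝔭 ∧ s ∉ 𝔭 ∧
        P.eval t₀ * algebraMap (NumberField.RingOfIntegers K) K s =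
          algebraMap (NumberField.RingOfIntegers K) K x}.Infinite := by
  refine Ideal.set_infinite_of_forall_exists_notMem (fun _ h𝔭 => h𝔭.1) fun n hn => ?_
  obtain ⟨𝔪, h𝔪, hn𝔪, hP𝔪⟩ := exists_isMaximal_isPrimeDivisor_notMem P hP hn
  exact ⟨𝔪, ⟨Ring.ne_bot_of_isMaximal_of_not_isField h𝔪 (RingOfIntegers.not_isField K),
    h𝔪.isPrime, hP𝔪⟩, hn𝔪⟩
end

section
/- The polynomial (T³ − 2)(T² + T + 1) ∈ ℤ[T] has a root modulo p for every prime p. -/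
theorem stmt18 (p : ℕ) (hp : p.Prime) :
    ∃ t : ℤ, (p : ℤ) ∣ (t ^ 3 - 2) * (t ^ 2 + t + 1) := by
  rcases Nat.lt_or_ge p 5 with h5 | h5
  · interval_cases p
    · exact absurd hp (by decide)
    · exact absurd hp (by decide)
    · exact ⟨0, by decide⟩
    · exact ⟨2, by decide⟩
    · exact absurd hp (by decide)
  haveI : Fact p.Prime := ⟨hp⟩
  suffices h : ∃ x : ZMod p, (x ^ 3 - 2) * (x ^ 2 + x + 1) = 0 by
    obtain ⟨x, hx⟩ := h
    refine ⟨(x.val : ℤ), ?_⟩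
    have : ((((x.val : ℤ) ^ 3 - 2) * ((x.val : ℤ) ^ 2 + (x.val : ℤ) + 1) : ℤ) : ZMod p) = 0 := by
      push_cast [ZMod.natCast_val, ZMod.cast_id]
      exact hx
    exact (ZMod.intCast_zmod_eq_zero_iff_dvd _ _).mp this
  have hcard : Nat.card (ZMod p)ˣ = p - 1 := by
    rw [Nat.card_eq_fintype_card, ZMod.card_units_eq_totient, Nat.totient_prime hp]
  rcases Nat.lt_or_ge ((p - 1) % 3) 1 with h3 | h3
  · -- 3 ∣ p - 1 : find a primitive cube root of unity
    have hdvd : 3 ∣ p - 1 := by omega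
    obtain ⟨g, hg⟩ := IsCyclic.exists_ofOrder_eq_natCard (α := (ZMod p)ˣ)
    rw [hcard] at hg
    set ω : (ZMod p)ˣ := g ^ ((p - 1) / 3) with hω
    have hpos : 0 < (p - 1) / 3 := Nat.div_pos (by omega) (by norm_num)
    have hω3 : ω ^ 3 = 1 := by
      rw [hω, ← pow_mul, Nat.div_mul_cancel hdvd, ← hg, pow_orderOf_eq_one]
    have hωne : ω ≠ 1 := by
      intro h
      have := orderOf_dvd_of_pow_eq_one (n := (p - 1) / 3) (x := g) h
      rw [hg] at this
      have := Nat.le_of_dvd hpos this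
      omega
    refine ⟨(ω : ZMod p), ?_⟩
    have hx3 : ((ω : ZMod p)) ^ 3 = 1 := by
      rw [← Units.val_pow_eq_pow_val, hω3, Units.val_one]
    have hxne : ((ω : ZMod p)) ≠ 1 := fun h => hωne (Units.ext h)
    have hfac : (((ω : ZMod p)) - 1) * (((ω : ZMod p)) ^ 2 + (ω : ZMod p) + 1) = 0 := by
      have : (((ω : ZMod p)) - 1) * (((ω : ZMod p)) ^ 2 + (ω : ZMod p) + 1)
          = ((ω : ZMod p)) ^ 3 - 1 := by ring
      rw [this, hx3, sub_self]
    rcases mul_eq_zero.mp hfac with h | h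
    · exact absurd (by linear_combination h) hxne
    · rw [h, mul_zero]
  · -- p ≢ 1 mod 3 : 2 is a cube
    have hcop : (Nat.card (ZMod p)ˣ).Coprime 3 := by
      rw [hcard]
      have hp3 : ¬ (3 ∣ p - 1) := by omega
      exact (Nat.coprime_comm.mp ((Nat.prime_three.coprime_iff_not_dvd).mpr hp3))
    have h2 : (2 : ZMod p) ≠ 0 := by
      intro h
      have h2' : p ∣ 2 := by
        have : ((2 : ℕ) : ZMod p) = 0 := by push_cast; exact h
        exact (ZMod.natCast_eq_zero_iff _ _).mp this
      have := Nat.le_of_dvd (by norm_num) h2'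
      omega
    obtain ⟨u, hu⟩ := h2.isUnit
    obtain ⟨v, hv⟩ := hcop.pow_left_bijective.surjective u
    refine ⟨(v : ZMod p), ?_⟩
    have hv' : v ^ 3 = u := hv
    have : ((v : ZMod p)) ^ 3 = 2 := by
      rw [← Units.val_pow_eq_pow_val, hv', hu]
    rw [this, sub_self, zero_mul]
end
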